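/- Let (X, S) be an aperiodic linearly recurrent subshift with constant K over a finite alphabet A, and let ζ be the partition of X into 1-cylinders. Then for every x ∈ X: 1/K ≤ R̲_ζ(x) ≤ R̄_ζ(x) ≤ K. -/

import Mathlib

open Filter Set
open scoped ENNReal

variable {A : Type*}

/-- The two-sided shift on `A^ℤ`. -/
def shiftZ (x : ℤ → A) : ℤ → A := fun n => x (n + 1)

/-- The finite word `u` occurs in the sequence `x` at position `i`. -/
def OccursAt (u : List A) (x : ℤ → A) (i : ℤ) : Prop :=
  ∀ j : Fin u.length, x (i + (j : ℕ)) = u.get j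

/-- The finite word `u` occurs (somewhere) in the sequence `x`. -/
def OccursIn (u : List A) (x : ℤ → A) : Prop := ∃ i : ℤ, OccursAt u x i

/-- The language `L(X)` of a subshift `X` : all finite words occurring in some
element of `X`. -/
def lang (X : Set (ℤ → A)) : Set (List A) := {u | ∃ x ∈ X, OccursIn u x}

/-- The language `L(x)` of a sequence `x` : all finite words occurring in `x`. -/
def langSeq (x : ℤ → A) : Set (List A) := {u | OccursIn u x}

/-- The number of occurrences of `u` as a factor of the finite word `v`. -/
noncomputable def occCount (u v : List A) : ℕ :=
  {i : ℕ | u <+: v.drop i ∧ i + u.length ≤ v.length}.ncard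

/-- `w` is a return word to `u` (for the language `L`) : `wu ∈ L`, `u` is a prefix of
`wu` and `u` has exactly two occurrences in `wu`. -/
def IsReturnWord (L : Set (List A)) (u w : List A) : Prop :=
  (w ++ u) ∈ L ∧ u <+: (w ++ u) ∧ occCount u (w ++ u) = 2

/-- `x` is uniformly recurrent: every word of `L(x)` occurs in `x` with bounded
gaps. -/
def UniformlyRecurrent (x : ℤ → A) : Prop :=
  ∀ u ∈ langSeq x, ∃ N : ℕ, ∀ i : ℤ, ∃ j : ℤ, i ≤ j ∧ j < i + N ∧ OccursAt u x j

/-- `x` is linearly recurrent with constant `K` : it is uniformly recurrent and every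
return word `w` to a word `u ∈ L(x)` satisfies `|w| ≤ K⬝|u|`. -/
def LinearlyRecurrentSeq (K : ℝ) (x : ℤ → A) : Prop :=
  UniformlyRecurrent x ∧
    ∀ u ∈ langSeq x, ∀ w : List A,
      IsReturnWord (langSeq x) u w → (w.length : ℝ) ≤ K * u.length

/-- A subshift: a closed shift-invariant subset of `A^ℤ`. -/
def IsSubshift [TopologicalSpace A] (X : Set (ℤ → A)) : Prop :=
  IsClosed X ∧ shiftZ '' X = X

/-- A minimal subshift: a nonempty subshift with no nonempty proper closed
shift-invariant subset. -/
def IsMinimalSubshift [TopologicalSpace A] (X : Set (ℤ → A)) : Prop :=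
  IsSubshift X ∧ X.Nonempty ∧
    ∀ Y ⊆ X, IsClosed Y → shiftZ '' Y = Y → Y = ∅ ∨ Y = X

/-- A linearly recurrent (LR) subshift with constant `K` : a minimal subshift
containing a linearly recurrent sequence with constant `K`. -/
def IsLRSubshift [TopologicalSpace A] (K : ℝ) (X : Set (ℤ → A)) : Prop :=
  IsMinimalSubshift X ∧ ∃ x ∈ X, LinearlyRecurrentSeq K x

/-- The subshift `X` is aperiodic: it contains no periodic point. -/
def AperiodicSubshift (X : Set (ℤ → A)) : Prop :=
  ∀ x ∈ X, ∀ n : ℕ, 0 < n → shiftZ^[n] x ≠ x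

/-- The fractional power `u^β` : the prefix of length `⌊|u|⬝β⌋` of `uuu⋯`. -/
noncomputable def fracPow (u : List A) (β : ℝ) : List A :=
  (List.flatten (List.replicate (⌈β⌉₊ + 1) u)).take ⌊(u.length : ℝ) * β⌋₊

/-- The Poincaré recurrence of a set `U` : `τ(U) = inf {k ≥ 1 : S^k U ∩ U ≠ ∅}`
(`∞` if no such `k` exists). -/
noncomputable def recOfSet {X : Type*} (T : X → X) (U : Set X) : ℝ≥0∞ :=
  sInf {t : ℝ≥0∞ | ∃ k : ℕ, 1 ≤ k ∧ (T^[k] '' U ∩ U).Nonempty ∧ t = k}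

/-- The atom `ζ_n(x)` of the refined partition `ζ ∨ S⁻¹ζ ∨ ⋯ ∨ S^{-n+1}ζ` of the
subshift `X`, where `ζ` is the partition into `1`-cylinders: it is the cylinder
`[x_0 x_1 ⋯ x_{n-1}]` (inside `X`). -/
def cylAtom {A : Type*} (X : Set (ℤ → A)) (n : ℕ) (x : ℤ → A) : Set (ℤ → A) :=
  {y ∈ X | ∀ k : ℕ, k < n → y (k : ℤ) = x (k : ℤ)}

/-- The lower local rate of Poincaré recurrence `R̲_ζ(x) = liminf_n τ(ζ_n(x))/n`
for the partition of the subshift `X` into `1`-cylinders. -/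
noncomputable def lowerRateCyl {A : Type*} (X : Set (ℤ → A)) (x : ℤ → A) : ℝ≥0∞ :=
  atTop.liminf fun n : ℕ => recOfSet shiftZ (cylAtom X n x) / (n : ℝ≥0∞)

/-- The upper local rate of Poincaré recurrence `R̄_ζ(x) = limsup_n τ(ζ_n(x))/n`
for the partition of the subshift `X` into `1`-cylinders. -/
noncomputable def upperRateCyl {A : Type*} (X : Set (ℤ → A)) (x : ℤ → A) : ℝ≥0∞ :=
  atTop.limsup fun n : ℕ => recOfSet shiftZ (cylAtom X n x) / (n : ℝ≥0∞)

/-!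
Linear recurrence bounds the distance between consecutive occurrences of a nonempty word `u`
in the LR sequence `x₀` by `K|u|`, and minimality makes every word of every `x ∈ X` a word
of `x₀`. Two occurrences of `x_0 ⋯ x_{n-1}` in `x₀` at distance at most `Kn` give
`τ(ζ_n(x)) ≤ Kn`. Conversely, if `S^k ζ_n(x)` meets `ζ_n(x)`, then `x₀` contains a
`k`-periodic block of length `n + k`; when `n + 1 > K(k + 1)` this block contains every word
of length `k + 1` of `x₀`, which forces `x₀` to be `k`-periodic. Aperiodicity therefore gives
`τ(ζ_n(x)) ≥ (n + 1 - K)/K`.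
-/

open scoped translate

section Words

def word (x : ℤ → A) (s : ℤ) (m : ℕ) : List A := List.ofFn fun j : Fin m => x (s + j)

@[simp] lemma length_word (x : ℤ → A) (s : ℤ) (m : ℕ) : (word x s m).length = m :=
  List.length_ofFn

@[simp] lemma getElem_word (x : ℤ → A) (s : ℤ) {m j : ℕ} (h : j < (word x s m).length) :
    (word x s m)[j] = x (s + j) :=
  List.getElem_ofFn h

lemma word_eq_word_iff {x y : ℤ → A} {s t : ℤ} {m : ℕ} :
    word x s m = word y t m ↔ ∀ l < m, x (s + l) = y (t + l) := by
  refine ⟨fun h l hl => ?_, fun h => List.ext_getElem (by simp) fun l hl _ => ?_⟩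
  · have := List.getElem_of_eq h (by rwa [length_word])
    rwa [getElem_word, getElem_word] at this
  · simpa using h l (by simpa using hl)

lemma occursAt_iff_word_eq {u : List A} {x : ℤ → A} {i : ℤ} :
    OccursAt u x i ↔ word x i u.length = u := by
  refine ⟨fun h => List.ext_getElem (length_word ..) fun j _ hj => by simpa using h ⟨j, hj⟩,
    fun h j => ?_⟩
  have := List.getElem_of_eq h (by rw [length_word]; exact j.2)
  rwa [getElem_word] at this

lemma word_mem_langSeq (x : ℤ → A) (s : ℤ) (m : ℕ) : word x s m ∈ langSeq x :=
  ⟨s, occursAt_iff_word_eq.2 (by rw [length_word])⟩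

lemma word_add (x : ℤ → A) (s : ℤ) (m l : ℕ) :
    word x s (m + l) = word x s m ++ word x (s + m) l := by
  refine List.ext_getElem (by simp) fun j _ hj => ?_
  rcases lt_or_ge j m with hjm | hjm
  · rw [List.getElem_append_left (by simpa using hjm)]
    simp
  · rw [List.getElem_append_right (by simpa using hjm)]
    simp only [getElem_word, length_word]
    congr 1
    omega

lemma take_drop_word (x : ℤ → A) (s : ℤ) {m i l : ℕ} (h : i + l ≤ m) :
    ((word x s m).drop i).take l = word x (s + i) l :=
  List.ext_getElem (by simp only [List.length_take, List.length_drop, length_word]; omega)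
    fun j _ _ => by simp [add_assoc]

lemma prefix_drop_word_iff {x : ℤ → A} {s : ℤ} {u : List A} {m i : ℕ}
    (h : i + u.length ≤ m) : u <+: (word x s m).drop i ↔ OccursAt u x (s + i) := by
  rw [occursAt_iff_word_eq, List.prefix_iff_eq_take, eq_comm, take_drop_word x s h]

lemma word_translate (x : ℤ → A) (k s : ℤ) (m : ℕ) : word (τ k x) s m = word x (s - k) m := by
  simp only [word, translate_apply, sub_add_eq_add_sub]

lemma shiftZ_iterate (x : ℤ → A) (k : ℕ) : shiftZ^[k] x = τ (-(k : ℤ)) x := by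
  induction k generalizing x with
  | zero => simp
  | succ k ih =>
    rw [Function.iterate_succ_apply, ih]
    ext n
    simp only [shiftZ, translate_apply]
    push_cast
    ring_nf

end Words

/-- Linear recurrence with the return-word bound required for nonempty words only
(every one-letter word is a return word to `[]`). -/
def ReturnWordsLinearlyBounded (K : ℝ) (x : ℤ → A) : Prop :=
  ∀ u ∈ langSeq x, u ≠ [] → ∀ w, IsReturnWord (langSeq x) u w → (w.length : ℝ) ≤ K * u.length

section LinearRecurrence

variable {K : ℝ} {x : ℤ → A} {u : List A}

lemma isReturnWord_word {s : ℤ} {d : ℕ} (hd : 0 < d) (hs : OccursAt u x s)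
    (ht : OccursAt u x (s + d)) (hno : ∀ i : ℕ, 0 < i → i < d → ¬ OccursAt u x (s + i)) :
    IsReturnWord (langSeq x) u (word x s d) := by
  have hwu : word x s d ++ u = word x s (d + u.length) := by
    rw [word_add, occursAt_iff_word_eq.1 ht]
  have hocc : {i : ℕ | u <+: (word x s (d + u.length)).drop i ∧
      i + u.length ≤ (word x s (d + u.length)).length} = {0, d} := by
    ext i
    simp only [Set.mem_ofPred_eq, Set.mem_insert_iff, Set.mem_singleton_iff, length_word]
    constructor
    · rintro ⟨hpre, hi⟩
      by_contra! hne
      exact hno i (by omega) (by omega) ((prefix_drop_word_iff hi).1 hpre)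
    · rintro (rfl | rfl)
      · exact ⟨(prefix_drop_word_iff (by omega)).2 (by simpa using hs), by omega⟩
      · exact ⟨(prefix_drop_word_iff le_rfl).2 ht, le_rfl⟩
  refine ⟨hwu ▸ word_mem_langSeq x s _, ?_, ?_⟩
  · simpa [hwu] using (prefix_drop_word_iff (i := 0) (by omega)).2 (by simpa using hs)
  · rw [hwu, occCount, hocc, Set.ncard_pair hd.ne]

namespace ReturnWordsLinearlyBounded

lemma gap_le (hK : ReturnWordsLinearlyBounded K x) (hu : u ≠ [])
    {s : ℤ} {d : ℕ} (hd : 0 < d) (hs : OccursAt u x s) (ht : OccursAt u x (s + d))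
    (hno : ∀ i : ℕ, 0 < i → i < d → ¬ OccursAt u x (s + i)) :
    (d : ℝ) ≤ K * u.length := by
  simpa using hK u ⟨s, hs⟩ hu _ (isReturnWord_word hd hs ht hno)

lemma exists_occursAt_around (hK : ReturnWordsLinearlyBounded K x) (hur : UniformlyRecurrent x)
    (hu : u ∈ langSeq x) (hne : u ≠ []) (i : ℤ) :
    ∃ p t : ℤ, p < i ∧ i ≤ t ∧ OccursAt u x p ∧ OccursAt u x t ∧
      ((t - p : ℤ) : ℝ) ≤ K * u.length := by
  obtain ⟨N, hN⟩ := hur u hu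
  obtain ⟨p, ⟨hp, hpi⟩, hpmax⟩ := Int.exists_greatest_of_bdd
    (P := fun z => OccursAt u x z ∧ z < i) ⟨i, fun z hz => hz.2.le⟩
    (by obtain ⟨j, -, hj, hocc⟩ := hN (i - N); exact ⟨j, hocc, by omega⟩)
  obtain ⟨t, ⟨ht, hti⟩, htmin⟩ := Int.exists_least_of_bdd
    (P := fun z => OccursAt u x z ∧ i ≤ z) ⟨i, fun z hz => hz.2⟩
    (by obtain ⟨j, hj, -, hocc⟩ := hN i; exact ⟨j, hocc, hj⟩)
  obtain ⟨d, rfl⟩ : ∃ d : ℕ, t = p + d := ⟨(t - p).toNat, by omega⟩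
  refine ⟨p, p + d, hpi, hti, hp, ht, ?_⟩
  have hgap := hK.gap_le hne (by omega) hp ht fun r hr hrd hocc => by
    rcases lt_or_ge (p + r) i with h | h
    · have := hpmax _ ⟨hocc, h⟩; omega
    · have := htmin _ ⟨hocc, h⟩; omega
  simpa using hgap

lemma one_le (hK : ReturnWordsLinearlyBounded K x) (hur : UniformlyRecurrent x) : 1 ≤ K := by
  obtain ⟨p, t, hpt, hti, -, -, hgap⟩ :=
    hK.exists_occursAt_around hur (word_mem_langSeq x 0 1) (by simp [word]) 0
  have : (1 : ℝ) ≤ ((t - p : ℤ) : ℝ) := by exact_mod_cast (by omega : 1 ≤ t - p)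
  simp only [length_word, Nat.cast_one, mul_one] at hgap
  linarith

lemma periodic_of_periodic_block (hK : ReturnWordsLinearlyBounded K x)
    (hur : UniformlyRecurrent x) {c : ℤ} {n k : ℕ}
    (hblock : ∀ l < n, x (c + l + k) = x (c + l)) (hn : K * (k + 1) < n + 1) :
    Function.Periodic x k := by
  intro j
  obtain ⟨p, t, hpc, hct, -, ht, hgap⟩ :=
    hK.exists_occursAt_around hur (word_mem_langSeq x j (k + 1)) (by simp [word]) c
  rw [occursAt_iff_word_eq, length_word, word_eq_word_iff] at ht
  obtain ⟨l, rfl⟩ : ∃ l : ℕ, t = c + l := ⟨(t - c).toNat, by omega⟩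
  have hl : l < n := by
    have : ((l : ℤ) : ℝ) + 1 ≤ ((c + l - p : ℤ) : ℝ) := by exact_mod_cast (by omega)
    push_cast [length_word] at this hgap
    exact_mod_cast (by linarith : (l : ℝ) < n)
  have h0 := ht 0 (by omega)
  have hk := ht k (by omega)
  simp only [Nat.cast_zero, add_zero] at h0
  rw [← hk, hblock l hl, h0]

end ReturnWordsLinearlyBounded

end LinearRecurrence

section Minimality

variable {X : Set (ℤ → A)} {x₀ x : ℤ → A}

lemma translate_mem_of_shiftZ_image_eq (hX : shiftZ '' X = X) (hx : x ∈ X) (k : ℤ) :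
    τ k x ∈ X := by
  induction k using Int.induction_on with
  | zero => simpa using hx
  | succ k ih =>
    obtain ⟨y, hy, hyx⟩ := hX.symm ▸ ih
    convert hy using 1
    ext n
    have := congrFun hyx (n - 1)
    simp only [shiftZ, translate_apply, sub_add_cancel] at this
    rw [translate_apply, this]
    ring_nf
  | pred k ih =>
    rw [← hX]
    refine ⟨_, ih, ?_⟩
    ext n
    simp only [shiftZ, translate_apply]
    ring_nf

lemma shiftZ_image_range_translate (x : ℤ → A) :
    shiftZ '' range (fun k : ℤ => τ k x) = range fun k : ℤ => τ k x := by
  have hshift (k : ℤ) : shiftZ (τ k x) = τ (k - 1) x := by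
    ext n
    simp only [shiftZ, translate_apply]
    ring_nf
  refine Subset.antisymm ?_ fun _ ⟨k, hk⟩ => ⟨τ (k + 1) x, ⟨k + 1, rfl⟩, by simp [hshift, ← hk]⟩
  rintro _ ⟨_, ⟨k, rfl⟩, rfl⟩
  exact ⟨k - 1, (hshift k).symm⟩

variable [TopologicalSpace A]

def shiftHomeomorph : (ℤ → A) ≃ₜ (ℤ → A) where
  toFun := shiftZ
  invFun := τ 1
  left_inv x := by ext; simp [shiftZ]
  right_inv x := by ext; simp [shiftZ]
  continuous_toFun := continuous_pi fun n => continuous_apply (n + 1)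
  continuous_invFun := continuous_pi fun n => continuous_apply (n - 1)

lemma IsMinimalSubshift.closure_range_translate (hmin : IsMinimalSubshift X) (hx₀ : x₀ ∈ X) :
    closure (range fun k : ℤ => τ k x₀) = X := by
  set O := range fun k : ℤ => τ k x₀
  have hsub : closure O ⊆ X :=
    closure_minimal (range_subset_iff.2 (translate_mem_of_shiftZ_image_eq hmin.1.2 hx₀))
      hmin.1.1
  have hinv : shiftZ '' closure O = closure O :=
    (shiftHomeomorph.image_closure O).trans (congrArg closure (shiftZ_image_range_translate x₀))
  refine (hmin.2.2 _ hsub isClosed_closure hinv).resolve_left fun hempty => ?_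
  have : x₀ ∈ closure O := subset_closure ⟨0, translate_zero x₀⟩
  simp [hempty] at this

variable [DiscreteTopology A]

lemma isOpen_setOf_occursAt (u : List A) (i : ℤ) : IsOpen {y : ℤ → A | OccursAt u y i} := by
  simp only [OccursAt, ofPred_forall]
  exact isOpen_iInter_of_finite fun j =>
    (continuous_apply (A := fun _ : ℤ => A) (i + ((j : ℕ) : ℤ))).isOpen_preimage {u.get j}
      (isOpen_discrete _)

lemma IsMinimalSubshift.langSeq_subset (hmin : IsMinimalSubshift X) (hx₀ : x₀ ∈ X)
    (hx : x ∈ X) : langSeq x ⊆ langSeq x₀ := by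
  rintro u ⟨i, hi⟩
  rw [← hmin.closure_range_translate hx₀] at hx
  obtain ⟨_, hocc, k, rfl⟩ := mem_closure_iff.1 hx _ (isOpen_setOf_occursAt u i) hi
  refine ⟨i - k, ?_⟩
  rw [occursAt_iff_word_eq, ← word_translate]
  exact occursAt_iff_word_eq.1 hocc

end Minimality

section Recurrence

variable {X : Set (ℤ → A)} {K : ℝ} {x₀ x : ℤ → A} {n : ℕ}

lemma mem_cylAtom_iff {y : ℤ → A} : y ∈ cylAtom X n x ↔ y ∈ X ∧ word y 0 n = word x 0 n := by
  simp [cylAtom, word_eq_word_iff]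

variable [TopologicalSpace A] [DiscreteTopology A]

lemma recOfSet_cylAtom_le (hmin : IsMinimalSubshift X) (hx₀ : x₀ ∈ X)
    (hur : UniformlyRecurrent x₀) (hK : ReturnWordsLinearlyBounded K x₀) (hx : x ∈ X)
    (hn : n ≠ 0) : recOfSet shiftZ (cylAtom X n x) ≤ ENNReal.ofReal (K * n) := by
  obtain ⟨p, t, hp0, h0t, hp, ht, hgap⟩ := hK.exists_occursAt_around hur
    (hmin.langSeq_subset hx₀ hx (word_mem_langSeq x 0 n))
    (List.ne_nil_of_length_pos (by rw [length_word]; omega)) 0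
  rw [occursAt_iff_word_eq, length_word] at hp ht
  obtain ⟨d, rfl⟩ : ∃ d : ℕ, t = p + d := ⟨(t - p).toNat, by omega⟩
  have hmem (s : ℤ) (hs : word x₀ s n = word x 0 n) : τ (-s) x₀ ∈ cylAtom X n x :=
    mem_cylAtom_iff.2 ⟨translate_mem_of_shiftZ_image_eq hmin.1.2 hx₀ _, by simpa [word_translate]⟩
  have hshift : shiftZ^[d] (τ (-p) x₀) = τ (-(p + d)) x₀ := by
    rw [shiftZ_iterate, translate_translate, neg_add, add_comm]
  have hrec : recOfSet shiftZ (cylAtom X n x) ≤ d :=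
    sInf_le ⟨d, by omega, ⟨_, ⟨_, hmem p hp, rfl⟩, hshift ▸ hmem _ ht⟩, rfl⟩
  calc recOfSet shiftZ (cylAtom X n x) ≤ ENNReal.ofReal d := by rwa [ENNReal.ofReal_natCast]
    _ ≤ ENNReal.ofReal (K * n) := ENNReal.ofReal_le_ofReal (by simpa using hgap)

lemma le_recOfSet_cylAtom (hmin : IsMinimalSubshift X) (hx₀ : x₀ ∈ X)
    (hur : UniformlyRecurrent x₀) (hK : ReturnWordsLinearlyBounded K x₀)
    (hap : AperiodicSubshift X) :
    ENNReal.ofReal ((n - (K - 1)) / K) ≤ recOfSet shiftZ (cylAtom X n x) := by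
  have hK0 : 0 < K := one_pos.trans_le (hK.one_le hur)
  refine le_sInf ?_
  rintro _ ⟨k, hk, ⟨_, ⟨y, hy, rfl⟩, hky⟩, rfl⟩
  rw [mem_cylAtom_iff] at hy hky
  rw [shiftZ_iterate, word_translate, ← hy.2, word_eq_word_iff] at hky
  obtain ⟨c, hc⟩ := hmin.langSeq_subset hx₀ hy.1 (word_mem_langSeq y 0 (n + k))
  rw [occursAt_iff_word_eq, length_word, word_eq_word_iff] at hc
  have hblock : ∀ l < n, x₀ (c + l + k) = x₀ (c + l) := fun l hl => by
    have h₁ := hc (l + k) (by omega)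
    have h₂ := hc l (by omega)
    have h₃ := hky.2 l hl
    push_cast at h₁ h₃
    rw [add_assoc, h₁, h₂, ← h₃]
    ring_nf
  have hkn : (n : ℝ) + 1 ≤ K * (k + 1) := by
    by_contra! hlt
    have hper := hK.periodic_of_periodic_block hur hblock hlt
    exact hap x₀ hx₀ k hk (by ext j; simp [shiftZ_iterate, hper j])
  rw [← ENNReal.ofReal_natCast]
  exact ENNReal.ofReal_le_ofReal (by rw [div_le_iff₀ hK0]; linarith)

end Recurrence

lemma ofReal_one_div_le_liminf_div {f : ℕ → ℝ≥0∞} {K b : ℝ} (hK : 0 < K)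
    (h : ∀ᶠ n : ℕ in atTop, ENNReal.ofReal ((n - b) / K) ≤ f n) :
    ENNReal.ofReal (1 / K) ≤ atTop.liminf fun n : ℕ => f n / n := by
  have hlim : Tendsto (fun n : ℕ => ENNReal.ofReal ((n - b) / K / n)) atTop
      (nhds (ENNReal.ofReal (1 / K))) := by
    refine (ENNReal.continuous_ofReal.tendsto _).comp ?_
    have := tendsto_const_nhds (x := 1 / K) |>.sub (tendsto_const_div_atTop_nhds_zero_nat (b / K))
    rw [sub_zero] at this
    refine this.congr' ?_
    filter_upwards [eventually_ne_atTop 0] with n hn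
    field_simp
  rw [← hlim.liminf_eq]
  refine liminf_le_liminf ?_
  filter_upwards [h, eventually_ne_atTop 0] with n hn hn0
  rw [ENNReal.ofReal_div_of_pos (by positivity), ENNReal.ofReal_natCast]
  exact ENNReal.div_le_div_right hn _

lemma limsup_div_le_ofReal {f : ℕ → ℝ≥0∞} {K : ℝ}
    (h : ∀ᶠ n : ℕ in atTop, f n ≤ ENNReal.ofReal (K * n)) :
    atTop.limsup (fun n : ℕ => f n / n) ≤ ENNReal.ofReal K := by
  refine limsup_le_of_le (by isBoundedDefault) ?_
  filter_upwards [h, eventually_ne_atTop 0] with n hn hn0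
  rw [ENNReal.div_le_iff (by simpa) (ENNReal.natCast_ne_top n), ← ENNReal.ofReal_natCast,
    ← ENNReal.ofReal_mul' n.cast_nonneg]
  exact hn

theorem stmt12_general {A : Type*} [TopologicalSpace A] [DiscreteTopology A]
    (X : Set (ℤ → A)) (K : ℝ)
    (hLR : IsLRSubshift K X) (hap : AperiodicSubshift X) :
    ∀ x ∈ X,
      ENNReal.ofReal (1 / K) ≤ lowerRateCyl X x ∧
        lowerRateCyl X x ≤ upperRateCyl X x ∧
          upperRateCyl X x ≤ ENNReal.ofReal K := by
  obtain ⟨hmin, x₀, hx₀, hur, hret⟩ := hLR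
  have hK : ReturnWordsLinearlyBounded K x₀ := fun u hu _ => hret u hu
  intro x hx
  refine ⟨ofReal_one_div_le_liminf_div (one_pos.trans_le (hK.one_le hur))
      (.of_forall fun n => le_recOfSet_cylAtom hmin hx₀ hur hK hap),
    liminf_le_limsup, limsup_div_le_ofReal ?_⟩
  filter_upwards [eventually_ne_atTop 0] with n hn
  exact recOfSet_cylAtom_le hmin hx₀ hur hK hx hn

/-- For an aperiodic linearly recurrent subshift with constant `K`
and the partition `ζ` into `1`-cylinders, every `x ∈ X` satisfies
`1/K ≤ R̲_ζ(x) ≤ R̄_ζ(x) ≤ K`. -/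
theorem stmt12 {A : Type*} [Fintype A] [TopologicalSpace A] [DiscreteTopology A]
    (X : Set (ℤ → A)) (K : ℝ)
    (hLR : IsLRSubshift K X) (hap : AperiodicSubshift X) :
    ∀ x ∈ X,
      ENNReal.ofReal (1 / K) ≤ lowerRateCyl X x ∧
        lowerRateCyl X x ≤ upperRateCyl X x ∧
          upperRateCyl X x ≤ ENNReal.ofReal K :=
  stmt12_general X K hLR hap
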